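/- Let n ≥ 1, d ≥ 2, k ≥ 1, and let δ be a ℂ-derivation of ℂ[x₀,…,xₙ] = MvPolynomial (Fin (n+1)) ℂ such that δ(xᵢ) is homogeneous of degree d for every i. Suppose there exists a finite set S of pairwise non-associated irreducible homogeneous polynomials of degree k, each δ-invariant, with |S| > C(n+k,k) and k·(|S| − C(n+k,k)) > (d−1)·C(C(n+k,k), 2). Then δ admits a rational first integral: there exist polynomials u, v, linearly independent over ℂ, with v·δ(u) = u·δ(v). -/

import Mathlib

/-!
Let `v` be the `N = C(n+k,k)` monomials of degree `k`. Their Wronskian `det (δⁱ vⱼ)` is a form of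
degree `N k + C(N,2) (d-1)`. Each invariant form `f ∈ S` is a combination of the `vⱼ`, so a column
operation turns one column of the Wronskian into `(δⁱ f)ᵢ`, whose entries are all multiples of `f`.
Hence the product of the pairwise coprime `f ∈ S`, of degree `|S| k`, divides the Wronskian, which
the degree hypothesis forces to vanish. A vanishing Wronskian of `ℂ`-linearly independent elements
of a domain yields a kernel vector `a` with `a_N δ(aⱼ) = aⱼ δ(a_N)` for all `j`, and not every
`aⱼ / a_N` is a constant.
-/

open Finset Matrix MvPolynomial

namespace Derivation

variable {K R : Type*} [Field K] [CommRing R] [Algebra K R]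

def wronskianMatrix (δ : Derivation K R R) {N : ℕ} (v : Fin N → R) : Matrix (Fin N) (Fin N) R :=
  Matrix.of fun i j => δ^[i] (v j)

/-- `u / w` is a nonconstant element of the fraction field killed by `δ`. -/
def HasRationalFirstIntegral (δ : Derivation K R R) : Prop :=
  ∃ u w : R, LinearIndependent K ![u, w] ∧ w * δ u = u * δ w

variable (δ : Derivation K R R)

lemma iterate_apply_eq_pow_apply (i : ℕ) (x : R) : δ^[i] x = ((δ : R →ₗ[K] R) ^ i) x :=
  (Module.End.pow_apply _ _ _).symm

lemma dvd_iterate_apply_self {f : R} (hf : f ∣ δ f) (i : ℕ) : f ∣ δ^[i] f := by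
  induction i with
  | zero => exact dvd_rfl
  | succ i ih =>
    obtain ⟨g, hg⟩ := ih
    rw [Function.iterate_succ_apply', hg, leibniz, smul_eq_mul, smul_eq_mul]
    exact dvd_add (dvd_mul_right f _) (hf.mul_left g)

lemma dvd_det_wronskianMatrix {N : ℕ} (v : Fin N → R) {f : R}
    (hspan : f ∈ Submodule.span K (Set.range v)) (hf₀ : f ≠ 0) (hf : f ∣ δ f) :
    f ∣ (δ.wronskianMatrix v).det := by
  obtain ⟨c, rfl⟩ := (Submodule.mem_span_range_iff_exists_fun K).1 hspan
  obtain ⟨j₀, hj₀⟩ : ∃ j, c j ≠ 0 := by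
    by_contra! hc
    simp [hc] at hf₀
  choose g hg using δ.dvd_iterate_apply_self hf
  -- replacing column `j₀` by `∑ⱼ cⱼ • (column j)` gives the column of derivatives of `f`
  have hcol := det_updateCol_sum (δ.wronskianMatrix v) j₀ (fun j => algebraMap K R (c j))
  have hfcol : (fun i => ∑ j, algebraMap K R (c j) • δ.wronskianMatrix v i j) =
      (∑ j, c j • v j) • fun i : Fin N => g i := by
    ext i
    simp only [wronskianMatrix, of_apply, Pi.smul_apply, smul_eq_mul, ← hg, ← Algebra.smul_def,
      iterate_apply_eq_pow_apply, map_sum, LinearMap.map_smul]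
  rw [hfcol, det_updateCol_smul] at hcol
  exact ((isUnit_iff_ne_zero.2 hj₀).map (algebraMap K R)).dvd_mul_left.1 (Dvd.intro _ hcol)

/-- Differentiate row `i` of `W a = 0` and cancel row `i + 1`. -/
lemma mulVec_derivation_eq_zero_of_wronskianMatrix_mulVec_eq_zero {N : ℕ}
    {v : Fin (N + 1) → R} {a : Fin (N + 1) → R} (ha : δ.wronskianMatrix v *ᵥ a = 0) :
    (δ.wronskianMatrix v).submatrix Fin.castSucc id *ᵥ (fun j => δ (a j)) = 0 := by
  ext i
  have hi := congrArg δ (congrFun ha i.castSucc)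
  have hi' := congrFun ha i.succ
  simp only [wronskianMatrix, mulVec, dotProduct, of_apply, Pi.zero_apply, Fin.val_castSucc,
    Fin.val_succ, map_sum, leibniz, smul_eq_mul, Function.iterate_succ_apply', map_zero,
    sum_add_distrib, submatrix_apply, id] at hi hi' ⊢
  simp_rw [mul_comm (a _)] at hi
  rwa [hi', add_zero] at hi

variable [IsDomain R]

lemma mul_derivation_eq_of_wronskianMatrix_mulVec_eq_zero {N : ℕ} {v : Fin (N + 1) → R}
    (hdet : (δ.wronskianMatrix (v ∘ Fin.castSucc)).det ≠ 0)
    {a : Fin (N + 1) → R} (ha : δ.wronskianMatrix v *ᵥ a = 0) (j : Fin (N + 1)) :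
    a (Fin.last N) * δ (a j) = a j * δ (a (Fin.last N)) := by
  set b : Fin (N + 1) → R := a (Fin.last N) • (fun j => δ (a j)) - δ (a (Fin.last N)) • a
  have hb_last : b (Fin.last N) = 0 := by simp [b, mul_comm]
  have hrows : (δ.wronskianMatrix v).submatrix Fin.castSucc id *ᵥ a = 0 := by
    ext i
    exact congrFun ha i.castSucc
  have hb : δ.wronskianMatrix (v ∘ Fin.castSucc) *ᵥ (b ∘ Fin.castSucc) = 0 := by
    have hda := δ.mulVec_derivation_eq_zero_of_wronskianMatrix_mulVec_eq_zero ha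
    have := congrArg₂ (· - ·) (congrArg (a (Fin.last N) • ·) hda)
      (congrArg (δ (a (Fin.last N)) • ·) hrows)
    simp only [← mulVec_smul, ← mulVec_sub, smul_zero, sub_zero] at this
    rw [← this]
    ext i
    simp [mulVec, dotProduct, Fin.sum_univ_castSucc, b, wronskianMatrix, mul_comm]
  have hb₀ := eq_zero_of_mulVec_eq_zero hdet hb
  have : b j = 0 := by
    induction j using Fin.lastCases with
    | last => exact hb_last
    | cast j => exact congrFun hb₀ j
  simpa [b, sub_eq_zero, mul_comm] using this

/-- A kernel vector `a` of the Wronskian matrix has all quotients `aⱼ / a_N` constant; they cannot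
all lie in `K`, since the `vⱼ` are linearly independent over `K`. -/
lemma hasRationalFirstIntegral_of_det_wronskianMatrix_eq_zero_of_ne_zero {N : ℕ}
    {v : Fin (N + 1) → R} (hv : LinearIndependent K v) (hdet : (δ.wronskianMatrix v).det = 0)
    (hdet' : (δ.wronskianMatrix (v ∘ Fin.castSucc)).det ≠ 0) :
    δ.HasRationalFirstIntegral := by
  classical
  obtain ⟨a, ha₀, ha⟩ := exists_mulVec_eq_zero_iff.2 hdet
  have hconst := δ.mul_derivation_eq_of_wronskianMatrix_mulVec_eq_zero hdet' ha
  have hlast : a (Fin.last N) ≠ 0 := by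
    intro hlast
    refine hdet' (exists_mulVec_eq_zero_iff.1 ⟨a ∘ Fin.castSucc, fun h => ha₀ ?_, ?_⟩)
    · ext j
      induction j using Fin.lastCases with
      | last => exact hlast
      | cast j => exact congrFun h j
    · ext i
      simpa [mulVec, dotProduct, Fin.sum_univ_castSucc, hlast, wronskianMatrix]
        using congrFun ha i.castSucc
  unfold HasRationalFirstIntegral
  by_contra! hdep
  have hγ : ∀ j, ∃ γ : K, γ • a (Fin.last N) = a j := fun j => by
    by_contra! h
    exact hdep _ _ ((LinearIndependent.pair_iff' hlast).2 h) (hconst j).symm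
  choose γ hγ using hγ
  have hrel : (∑ j, γ j • v j) * a (Fin.last N) = 0 := calc
    _ = ∑ j, v j * (γ j • a (Fin.last N)) := by
      simp only [sum_mul, smul_mul_assoc, mul_comm (v _)]
    _ = 0 := by
      simp_rw [hγ]
      simpa [mulVec, dotProduct, wronskianMatrix] using congrFun ha 0
  have hγ₀ := Fintype.linearIndependent_iff.1 hv γ
    ((mul_eq_zero.1 hrel).resolve_right hlast) (Fin.last N)
  exact hlast (by rw [← hγ, hγ₀, zero_smul])

theorem hasRationalFirstIntegral_of_det_wronskianMatrix_eq_zero {N : ℕ} {v : Fin N → R}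
    (hv : LinearIndependent K v) (hdet : (δ.wronskianMatrix v).det = 0) :
    δ.HasRationalFirstIntegral := by
  induction N with
  | zero => simp [wronskianMatrix] at hdet
  | succ N ih =>
    by_cases hdet' : (δ.wronskianMatrix (v ∘ Fin.castSucc)).det = 0
    · exact ih (hv.comp _ (Fin.castSucc_injective N)) hdet'
    · exact δ.hasRationalFirstIntegral_of_det_wronskianMatrix_eq_zero_of_ne_zero hv hdet hdet'

end Derivation

lemma Finset.prod_dvd_of_pairwise_not_associated {α : Type*} [CommMonoid α]
    [DecompositionMonoid α] {S : Finset α} {z : α} (hirr : ∀ f ∈ S, Irreducible f)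
    (hassoc : ∀ f ∈ S, ∀ g ∈ S, f ≠ g → ¬Associated f g) (hdvd : ∀ f ∈ S, f ∣ z) :
    ∏ f ∈ S, f ∣ z :=
  prod_dvd_of_isRelPrime (fun f hf g hg hfg => (hirr f hf).isRelPrime_iff_not_dvd.2
    fun h => hassoc f hf g hg hfg ((hirr f hf).associated_of_dvd (hirr g hg) h)) hdvd

namespace MvPolynomial

section Homogeneous

variable {σ R : Type*} [CommSemiring R]

lemma homogeneousSubmodule_eq_span_monomial (n : ℕ) :
    homogeneousSubmodule σ R n = Submodule.span R ((monomial · 1) '' {s | s.degree = n}) := by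
  rw [← restrictSupport_eq_span, homogeneousSubmodule_eq_finsupp_supported]
  rfl

lemma IsHomogeneous.le_of_dvd [NoZeroDivisors R] {p q : MvPolynomial σ R} {a b : ℕ}
    (hp : p.IsHomogeneous a) (hq : q.IsHomogeneous b) (hq₀ : q ≠ 0) (hpq : p ∣ q) : a ≤ b := by
  obtain ⟨r, rfl⟩ := hpq
  rw [← hq.totalDegree hq₀, totalDegree_mul_of_isDomain (left_ne_zero_of_mul hq₀)
    (right_ne_zero_of_mul hq₀), hp.totalDegree (left_ne_zero_of_mul hq₀)]
  exact Nat.le_add_right a _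

variable (δ : Derivation R (MvPolynomial σ R) (MvPolynomial σ R)) {e : ℕ}

lemma isHomogeneous_derivation_monomial (hδ : ∀ i, (δ (X i)).IsHomogeneous (e + 1))
    (s : σ →₀ ℕ) : (δ (monomial s 1)).IsHomogeneous (s.degree + e) := by
  induction s using Finsupp.induction_linear with
  | zero => simp [isHomogeneous_zero]
  | add s t hs ht =>
    rw [← one_mul (1 : R), ← monomial_mul, Derivation.leibniz, smul_eq_mul, smul_eq_mul]
    have h₁ := (isHomogeneous_monomial (1 : R) (rfl : s.degree = _)).mul ht
    have h₂ := (isHomogeneous_monomial (1 : R) (rfl : t.degree = _)).mul hs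
    rw [← add_assoc] at h₁
    rw [← add_assoc, add_comm t.degree] at h₂
    rw [map_add]
    exact h₁.add h₂
  | single i b =>
    rw [← X_pow_eq_monomial, Derivation.leibniz_pow, Finsupp.degree_single]
    rcases b with _ | b
    · simp [isHomogeneous_zero]
    · rw [nsmul_eq_mul, smul_eq_mul, ← C_eq_coe_nat, add_right_comm]
      exact ((isHomogeneous_X_pow i b).mul (hδ i)).C_mul _

lemma IsHomogeneous.derivation (hδ : ∀ i, (δ (X i)).IsHomogeneous (e + 1))
    {f : MvPolynomial σ R} {a : ℕ} (hf : f.IsHomogeneous a) : (δ f).IsHomogeneous (a + e) := by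
  have hle : homogeneousSubmodule σ R a ≤
      (homogeneousSubmodule σ R (a + e)).comap (δ : MvPolynomial σ R →ₗ[R] MvPolynomial σ R) := by
    rw [homogeneousSubmodule_eq_span_monomial, Submodule.span_le]
    rintro _ ⟨s, hs, rfl⟩
    simpa [hs.symm] using isHomogeneous_derivation_monomial δ hδ s
  exact hle hf

lemma IsHomogeneous.iterate_derivation (hδ : ∀ i, (δ (X i)).IsHomogeneous (e + 1))
    {f : MvPolynomial σ R} {a : ℕ} (hf : f.IsHomogeneous a) (i : ℕ) :
    (δ^[i] f).IsHomogeneous (a + i * e) := by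
  induction i with
  | zero => simpa using hf
  | succ i ih =>
    rw [Function.iterate_succ_apply', add_one_mul, ← add_assoc]
    exact ih.derivation δ hδ

end Homogeneous

lemma isHomogeneous_det {σ R ι : Type*} [CommRing R] [Fintype ι] [DecidableEq ι]
    {M : Matrix ι ι (MvPolynomial σ R)} {w : ι → ℕ} (hM : ∀ i j, (M i j).IsHomogeneous (w i)) :
    M.det.IsHomogeneous (∑ i, w i) := by
  rw [← det_transpose, det_apply]
  refine IsHomogeneous.sum _ _ _ fun τ _ => ?_
  rw [Units.smul_def]
  exact (mem_homogeneousSubmodule _ _).1 <| zsmul_mem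
    (IsHomogeneous.prod _ _ _ fun i _ => hM i (τ i)) _

variable {σ K : Type*} [Field K]

/-- Row `i` has degree `k + i e`, and `0 + 1 + ⋯ + (N - 1) = N.choose 2`. -/
lemma isHomogeneous_det_wronskianMatrix (δ : Derivation K (MvPolynomial σ K) (MvPolynomial σ K))
    {e : ℕ} (hδ : ∀ i, (δ (X i)).IsHomogeneous (e + 1)) {N k : ℕ} {v : Fin N → MvPolynomial σ K}
    (hv : ∀ j, (v j).IsHomogeneous k) :
    (δ.wronskianMatrix v).det.IsHomogeneous (N * k + N.choose 2 * e) := by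
  have hsum : ∑ i : Fin N, (k + i * e) = N * k + N.choose 2 * e := by
    rw [sum_add_distrib, ← sum_mul, Fin.sum_univ_eq_sum_range (·), sum_range_id,
      ← Nat.choose_two_right]
    simp
  rw [← hsum]
  exact isHomogeneous_det fun i j => (hv j).iterate_derivation δ hδ i

lemma exists_linearIndependent_isHomogeneous_spanning [Fintype σ] [DecidableEq σ] (k : ℕ) :
    ∃ v : Fin ((Fintype.card σ + k - 1).choose k) → MvPolynomial σ K,
      LinearIndependent K v ∧ (∀ j, (v j).IsHomogeneous k) ∧
        ∀ f : MvPolynomial σ K, f.IsHomogeneous k → f ∈ Submodule.span K (Set.range v) := by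
  have hmem : ∀ s, s ∈ (univ : Finset σ).finsuppAntidiag k ↔ s.degree = k := by
    simp [mem_finsuppAntidiag, Finsupp.degree_eq_sum]
  let e := equivFinOfCardEq (card_finsuppAntidiag_nat_eq_choose (s := (univ : Finset σ)) k)
  refine ⟨fun j => monomial (e.symm j : σ →₀ ℕ) 1, ?_, fun j => ?_, fun f hf => ?_⟩
  · have := (basisMonomials σ K).linearIndependent.comp _
      (Subtype.val_injective.comp e.symm.injective)
    rwa [coe_basisMonomials] at this
  · exact isHomogeneous_monomial _ ((hmem _).1 (e.symm j).2)
  · have hf' : f ∈ homogeneousSubmodule σ K k := hf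
    rw [homogeneousSubmodule_eq_span_monomial] at hf'
    refine Submodule.span_mono ?_ hf'
    rintro _ ⟨s, hs, rfl⟩
    exact ⟨e ⟨s, (hmem s).2 hs⟩, by simp only [Equiv.symm_apply_apply]⟩

end MvPolynomial

theorem rational_first_integral_of_many_invariant_hypersurfaces_general (n d k : ℕ)
    (hd : 2 ≤ d)
    (δ : Derivation ℂ (MvPolynomial (Fin (n + 1)) ℂ) (MvPolynomial (Fin (n + 1)) ℂ))
    (hδ : ∀ i, (δ (MvPolynomial.X i)).IsHomogeneous d)
    (S : Finset (MvPolynomial (Fin (n + 1)) ℂ))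
    (hirr : ∀ f ∈ S, Irreducible f)
    (hhom : ∀ f ∈ S, f.IsHomogeneous k)
    (hinv : ∀ f ∈ S, f ∣ δ f)
    (hassoc : ∀ f ∈ S, ∀ g ∈ S, f ≠ g → ¬ Associated f g)
    (hcard : (n + k).choose k < S.card)
    (hbig : (d - 1) * ((n + k).choose k).choose 2 < k * (S.card - (n + k).choose k)) :
    ∃ u v : MvPolynomial (Fin (n + 1)) ℂ,
      LinearIndependent ℂ ![u, v] ∧ v * δ u = u * δ v := by
  obtain ⟨v, hv, hv_hom, hv_span⟩ :=
    exists_linearIndependent_isHomogeneous_spanning (σ := Fin (n + 1)) (K := ℂ) k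
  have hN : (Fintype.card (Fin (n + 1)) + k - 1).choose k = (n + k).choose k := by
    simp [add_right_comm]
  have hδ' : ∀ i, (δ (X i)).IsHomogeneous (d - 1 + 1) := by
    rwa [Nat.sub_add_cancel (by omega)]
  refine δ.hasRationalFirstIntegral_of_det_wronskianMatrix_eq_zero hv (by_contra fun hW => ?_)
  have hdvd : ∏ f ∈ S, f ∣ (δ.wronskianMatrix v).det :=
    Finset.prod_dvd_of_pairwise_not_associated hirr hassoc fun f hf =>
      δ.dvd_det_wronskianMatrix v (hv_span f (hhom f hf)) (hirr f hf).ne_zero (hinv f hf)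
  have hprod : (∏ f ∈ S, f).IsHomogeneous (S.card * k) := by
    simpa using IsHomogeneous.prod S id (fun _ => k) hhom
  have hle := hprod.le_of_dvd (isHomogeneous_det_wronskianMatrix δ hδ' hv_hom) hW hdvd
  rw [hN] at hle
  obtain ⟨t, ht⟩ := Nat.exists_eq_add_of_lt hcard
  rw [ht, Nat.add_assoc, Nat.add_sub_cancel_left] at hbig
  rw [ht] at hle
  nlinarith

/-- Corollary 3 of the paper: if a degree-`d` foliation `δ` on `ℙⁿ` has a set `S` of
pairwise non-associated irreducible homogeneous invariant polynomials of degree `k` with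
`|S| > C(n+k,k)` and `k * (|S| - C(n+k,k)) > (d-1) * C(C(n+k,k), 2)`, then `δ` admits a
rational first integral. -/
theorem rational_first_integral_of_many_invariant_hypersurfaces (n d k : ℕ)
    (hn : 1 ≤ n) (hd : 2 ≤ d) (hk : 1 ≤ k)
    (δ : Derivation ℂ (MvPolynomial (Fin (n + 1)) ℂ) (MvPolynomial (Fin (n + 1)) ℂ))
    (hδ : ∀ i, (δ (MvPolynomial.X i)).IsHomogeneous d)
    (S : Finset (MvPolynomial (Fin (n + 1)) ℂ))
    (hirr : ∀ f ∈ S, Irreducible f)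
    (hhom : ∀ f ∈ S, f.IsHomogeneous k)
    (hinv : ∀ f ∈ S, f ∣ δ f)
    (hassoc : ∀ f ∈ S, ∀ g ∈ S, f ≠ g → ¬ Associated f g)
    (hcard : (n + k).choose k < S.card)
    (hbig : (d - 1) * ((n + k).choose k).choose 2 < k * (S.card - (n + k).choose k)) :
    ∃ u v : MvPolynomial (Fin (n + 1)) ℂ,
      LinearIndependent ℂ ![u, v] ∧ v * δ u = u * δ v :=
  rational_first_integral_of_many_invariant_hypersurfaces_general n d k hd δ hδ S hirr hhom hinv
    hassoc hcard hbig
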